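/- For every real β with −1/3 < β < 0 there exists ε₀ > 0 such that for all ε with 0 < ε < ε₀, setting α := −β, the ε-modified λ-slopes satisfy both λ^ε_{α,β}(1,1,1/2,1/6) > λ^ε_{α,β}(1,−1,1/2,−1/6) and λ^ε_{α,β}(1,1,1/2,1/6) > λ^ε_{α,β}(3,−2,0,2/3); explicitly, −β/3 + 1/3 + 2ε(β−1)/(1−2β) > −β/3 − 1/3 + 2ε(β+1)/(2β+1), and −β/3 + 1/3 + 2ε(β−1)/(1−2β) > (1−β²)/(3β) + ε(3β+2)/(2β). (These are the comparisons λ(O(1)) > λ(O(−1)) and λ(O(1)) > λ(Q) on the region V₃ where α = −β.) -/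

import Mathlib

/-- The `ε`-modified second-tilt slope `λ^ε_{α,β}` of a Chern vector
`(r, c₁, c₂, c₃)` on `P³` (`H³ = 1`). -/
noncomputable def tiltLambdaEps (α β ε r c₁ c₂ c₃ : ℝ) : ℝ :=
  ((c₃ - β * c₂ + (β ^ 2 / 2) * c₁ - (β ^ 3 / 6) * r)
      - (α ^ 2 / 6) * (c₁ - β * r) - ε * (c₁ - β * r)) /
    (c₂ - β * c₁ + (β ^ 2 / 2) * r - (α ^ 2 / 2) * r)

/-!
The slopes are affine in `ε`. Since `ch^β(O(k)) = (1, k - β, (k - β)²/2, (k - β)³/6)`, the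
denominator `((k - β)² - α²)/2` of `λ(O(k))` divides the `ε`-free part `(k - β)((k - β)² - α²)/6`
of its numerator. At `ε = 0` and `α = -β` both comparisons are strict,
`λ(O(1)) - λ(O(-1)) = 2/3` and `λ(O(1)) - λ(Q) = (β - 1)/(3β) > 0`, so by continuity in `ε`
they persist for all small `ε > 0`.
-/

open Topology

theorem tiltLambdaEps_lineBundle {α β ε k c₂ c₃ : ℝ} (hc₂ : c₂ = k ^ 2 / 2)
    (hc₃ : c₃ = k ^ 3 / 6) (h : (k - β) ^ 2 ≠ α ^ 2) :
    tiltLambdaEps α β ε 1 k c₂ c₃ = (k - β) / 3 - 2 * ε * (k - β) / ((k - β) ^ 2 - α ^ 2) := by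
  have hden : (k - β) ^ 2 - α ^ 2 ≠ 0 := sub_ne_zero.2 h
  subst hc₂ hc₃
  unfold tiltLambdaEps
  rw [div_eq_iff (by contrapose! hden; linear_combination 2 * hden)]
  field_simp
  ring

theorem tiltLambdaEps_O_one {β ε : ℝ} (h : 1 - 2 * β ≠ 0) :
    tiltLambdaEps (-β) β ε 1 1 (1/2) (1/6) = -β / 3 + 1/3 + 2 * ε * (β - 1) / (1 - 2 * β) := by
  rw [tiltLambdaEps_lineBundle (by norm_num) (by norm_num)
    (by contrapose! h; linear_combination h)]
  field_simp
  ring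

theorem tiltLambdaEps_O_neg_one {β ε : ℝ} (h : 2 * β + 1 ≠ 0) :
    tiltLambdaEps (-β) β ε 1 (-1) (1/2) (-1/6)
      = -β / 3 - 1/3 + 2 * ε * (β + 1) / (2 * β + 1) := by
  rw [tiltLambdaEps_lineBundle (by norm_num) (by norm_num)
    (by contrapose! h; linear_combination h)]
  field_simp
  ring

theorem tiltLambdaEps_Q {β ε : ℝ} (hβ : β ≠ 0) :
    tiltLambdaEps (-β) β ε 3 (-2) 0 (2/3) = (1 - β ^ 2) / (3 * β) + ε * (3 * β + 2) / (2 * β) := by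
  unfold tiltLambdaEps
  field_simp
  ring

/-- For every `−1/3 < β < 0` there is `ε₀ > 0` such that for all
`0 < ε < ε₀`, taking `α := −β`, the `ε`-modified slopes satisfy
`λ^ε(O(1)) > λ^ε(O(−1))` and `λ^ε(O(1)) > λ^ε(Q)`; explicitly
`−β/3 + 1/3 + 2ε(β−1)/(1−2β) > −β/3 − 1/3 + 2ε(β+1)/(2β+1)` and
`−β/3 + 1/3 + 2ε(β−1)/(1−2β) > (1−β²)/(3β) + ε(3β+2)/(2β)`. -/
theorem lambda_eps_comparisons_on_V3 (β : ℝ) (h1 : -1/3 < β) (h2 : β < 0) :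
    ∃ ε₀ > 0, ∀ ε : ℝ, 0 < ε → ε < ε₀ →
      tiltLambdaEps (-β) β ε 1 1 (1/2) (1/6)
          > tiltLambdaEps (-β) β ε 1 (-1) (1/2) (-1/6) ∧
      tiltLambdaEps (-β) β ε 1 1 (1/2) (1/6)
          > tiltLambdaEps (-β) β ε 3 (-2) 0 (2/3) ∧
      (-β / 3 + 1/3 + 2 * ε * (β - 1) / (1 - 2 * β)
          > -β / 3 - 1/3 + 2 * ε * (β + 1) / (2 * β + 1)) ∧
      (-β / 3 + 1/3 + 2 * ε * (β - 1) / (1 - 2 * β)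
          > (1 - β ^ 2) / (3 * β) + ε * (3 * β + 2) / (2 * β)) := by
  have hO : ∀ᶠ ε in 𝓝 (0 : ℝ), -β / 3 - 1/3 + 2 * ε * (β + 1) / (2 * β + 1)
      < -β / 3 + 1/3 + 2 * ε * (β - 1) / (1 - 2 * β) := by
    refine ContinuousAt.eventually_lt (by fun_prop) (by fun_prop) ?_
    simp only [mul_zero, zero_mul, zero_div, add_zero]
    linarith
  have hQ : ∀ᶠ ε in 𝓝 (0 : ℝ), (1 - β ^ 2) / (3 * β) + ε * (3 * β + 2) / (2 * β)
      < -β / 3 + 1/3 + 2 * ε * (β - 1) / (1 - 2 * β) := by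
    refine ContinuousAt.eventually_lt (by fun_prop) (by fun_prop) ?_
    simp only [mul_zero, zero_mul, zero_div, add_zero]
    rw [div_lt_iff_of_neg (by linarith)]
    linarith
  obtain ⟨ε₀, hε₀, hsmall⟩ := mem_nhdsGT_iff_exists_Ioo_subset.1 (nhdsWithin_le_nhds (hO.and hQ))
  refine ⟨ε₀, hε₀, fun ε hε hεε₀ => ?_⟩
  obtain ⟨hO_ε, hQ_ε⟩ := hsmall ⟨hε, hεε₀⟩
  rw [tiltLambdaEps_O_one (by linarith), tiltLambdaEps_O_neg_one (by linarith),
    tiltLambdaEps_Q h2.ne]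
  exact ⟨hO_ε, hQ_ε, hO_ε, hQ_ε⟩
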